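/- arXiv:1710.06009 — 6 statements merged into one kernel-verified Lean document; each statement's English description precedes it below -/
import Mathlib

section
/- If $(s_0, s_1, \ldots, s_{n-1})$ is a sequence of non-negative integers with $\sum_{i=0}^{n-1} s_i = n - k$ where $1 \le k \le n$, then exactly $k$ of the $n$ cyclic rotations $(s_i, s_{i+1}, \ldots, s_{n-1}, s_0, \ldots, s_{i-1})$ have the property that all proper partial sums stay 'above the lattice path boundary', i.e., for every $1 \le m \le n-1$, the rotation $\hat s$ satisfies $\sum_{j=0}^{m-1} (\hat s_j - 1) > -k$. -/
/-- Counting lemma: for a function `G : ℕ → ℤ` with `G (m+n) = G m - k` and steps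
decreasing by at most 1, exactly `k` indices `i < n` are such that `i + n` is a
strict record minimum. -/
private lemma count_records (n k : ℕ) (hn : 0 < n) (hk : 0 < k) (G : ℕ → ℤ)
    (hper : ∀ m, G (m + n) = G m - k)
    (hstep : ∀ m, G m - 1 ≤ G (m + 1)) :
    ((Finset.range n).filter (fun i => ∀ u < i + n, G (i + n) < G u)).card = k := by
  classical
  obtain ⟨u0, hu0, hu0min⟩ := Finset.exists_min_image (Finset.range n) G
    ⟨0, Finset.mem_range.mpr hn⟩
  rw [Finset.mem_range] at hu0
  have hmin : ∀ u < n, G u0 ≤ G u := fun u hu => hu0min u (Finset.mem_range.mpr hu)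
  have hcard : (Finset.Ico (G u0 - k) (G u0)).card = k := by
    rw [Int.card_Ico]; omega
  rw [← hcard]
  apply Finset.card_bij (fun i _ => G (i + n))
  · intro i hi
    rw [Finset.mem_filter, Finset.mem_range] at hi
    obtain ⟨hin, hrec⟩ := hi
    rw [Finset.mem_Ico]
    refine ⟨?_, ?_⟩
    · have h1 := hmin i hin
      have h2 := hper i
      omega
    · have h1 : G (i + n) < G u0 := hrec u0 (by omega)
      have h2 := hmin i hin
      omega
  · intro a ha b hb hab
    rw [Finset.mem_filter, Finset.mem_range] at ha hb
    by_contra hne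
    rcases Nat.lt_or_ge a b with h | h
    · have h1 := hb.2 (a + n) (by omega)
      omega
    · have h' : b < a := by omega
      have h1 := ha.2 (b + n) (by omega)
      omega
  · intro v hv
    rw [Finset.mem_Ico] at hv
    have hex : ∃ t, G t ≤ v := ⟨u0 + n, by rw [hper]; omega⟩
    set t := Nat.find hex with ht
    have htle : G t ≤ v := Nat.find_spec hex
    have htmin : ∀ u < t, v < G u := fun u hu => by
      have := Nat.find_min hex hu; omega
    have htub : t ≤ u0 + n := Nat.find_min' hex (by rw [hper]; omega)
    have htn : n ≤ t := by
      by_contra h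
      have := hmin t (by omega)
      omega
    have htv : G t = v := by
      obtain ⟨t', ht'⟩ : ∃ t', t = t' + 1 := ⟨t - 1, by omega⟩
      have h1 := htmin t' (by omega)
      have h2 := hstep t'
      rw [ht'] at htle ⊢
      omega
    have heq : t - n + n = t := by omega
    refine ⟨t - n, ?_, ?_⟩
    · rw [Finset.mem_filter, Finset.mem_range]
      rw [heq]
      exact ⟨by omega, fun u hu => htv ▸ htmin u hu⟩
    · rw [heq, htv]

/-- **Cycle lemma (Dvoretzky–Motzkin).** If `s : Fin n → ℕ` sums to `n - k` with
`1 ≤ k ≤ n`, then exactly `k` of the `n` cyclic rotations of `s` have all proper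
partial sums of `s_j - 1` strictly above `-k`. -/
theorem cycle_lemma (n k : ℕ) (hk1 : 1 ≤ k) (hkn : k ≤ n)
    (s : Fin n → ℕ) (hs : ∑ i, s i = n - k) :
    (Finset.univ.filter (fun i : Fin n =>
      ∀ m : ℕ, 1 ≤ m → m ≤ n - 1 →
        -(k : ℤ) < ∑ j ∈ Finset.range m,
          ((s ⟨(i.val + j) % n, Nat.mod_lt _ (by omega)⟩ : ℤ) - 1))).card = k := by
  classical
  have hn : 0 < n := lt_of_lt_of_le hk1 hkn
  obtain ⟨f, hfdef⟩ : ∃ f : ℕ → ℤ, ∀ j, f j = (s ⟨j % n, Nat.mod_lt _ hn⟩ : ℤ) - 1 :=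
    ⟨_, fun _ => rfl⟩
  obtain ⟨G, hGdef⟩ : ∃ G : ℕ → ℤ, ∀ m, G m = ∑ j ∈ Finset.range m, f j :=
    ⟨_, fun _ => rfl⟩
  have hfper : ∀ j, f (j + n) = f j := by
    intro j; simp only [hfdef, Nat.add_mod_right]
  have hfval : ∀ i : Fin n, f i.val = (s i : ℤ) - 1 := by
    intro i
    simp [hfdef, Nat.mod_eq_of_lt i.isLt]
  have hGn : G n = -(k : ℤ) := by
    rw [hGdef, ← Fin.sum_univ_eq_sum_range f n]
    have h2 : ∑ i : Fin n, f i.val = ∑ i : Fin n, ((s i : ℤ) - 1) :=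
      Finset.sum_congr rfl fun i _ => hfval i
    have h3 : (∑ i : Fin n, (s i : ℤ)) = ((n - k : ℕ) : ℤ) := by
      rw [← hs]; push_cast; ring
    have h4 : ∑ _i : Fin n, (1 : ℤ) = n := by simp
    rw [h2, Finset.sum_sub_distrib, h3, h4]
    omega
  have h0 : G 0 = 0 := by rw [hGdef]; simp
  have hsucc : ∀ m, G (m + 1) = G m + f m := by
    intro m
    rw [hGdef, hGdef, Finset.sum_range_succ]
  have hper : ∀ m, G (m + n) = G m - k := by
    intro m
    induction m with
    | zero => rw [Nat.zero_add, hGn, h0]; ring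
    | succ m ih =>
      have h1 : G (m + 1 + n) = G (m + n) + f (m + n) := by
        rw [show m + 1 + n = (m + n) + 1 from by omega, hsucc]
      rw [h1, hfper, ih, hsucc]
      ring
  have hstep : ∀ m, G m - 1 ≤ G (m + 1) := by
    intro m
    have h3 : -1 ≤ f m := by
      rw [hfdef]
      have : (0 : ℤ) ≤ (s ⟨m % n, Nat.mod_lt _ hn⟩ : ℤ) := Int.natCast_nonneg _
      omega
    have := hsucc m
    omega
  have hshift : ∀ (i m : ℕ), G (i + m) = G i + ∑ j ∈ Finset.range m, f (i + j) := by
    intro i m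
    induction m with
    | zero => simp
    | succ m ih =>
      have h1 : G (i + (m + 1)) = G (i + m) + f (i + m) := by
        rw [show i + (m + 1) = (i + m) + 1 from by omega, hsucc]
      rw [h1, ih, Finset.sum_range_succ]
      ring
  -- predicate equivalence
  have key : ∀ i : Fin n,
      (∀ m : ℕ, 1 ≤ m → m ≤ n - 1 →
        -(k : ℤ) < ∑ j ∈ Finset.range m,
          ((s ⟨(i.val + j) % n, Nat.mod_lt _ (by omega)⟩ : ℤ) - 1)) ↔
      (∀ u < i.val + n, G (i.val + n) < G u) := by
    intro i
    have hsumeq : ∀ m : ℕ, (∑ j ∈ Finset.range m,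
        ((s ⟨(i.val + j) % n, Nat.mod_lt _ (by omega)⟩ : ℤ) - 1))
        = ∑ j ∈ Finset.range m, f (i.val + j) :=
      fun m => Finset.sum_congr rfl fun j _ => (hfdef (i.val + j)).symm
    have hin : i.val < n := i.isLt
    constructor
    · intro hpred u hu
      have hGin : G (i.val + n) = G i.val - k := hper i.val
      rcases Nat.lt_trichotomy u i.val with h | h | h
      · have h1 : 1 ≤ u + n - i.val := by omega
        have h2 : u + n - i.val ≤ n - 1 := by omega
        have h3 := hpred (u + n - i.val) h1 h2
        rw [hsumeq] at h3
        have h4 := hshift i.val (u + n - i.val)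
        rw [show i.val + (u + n - i.val) = u + n from by omega] at h4
        have h6 := hper u
        omega
      · subst h
        omega
      · have h1 : 1 ≤ u - i.val := by omega
        have h2 : u - i.val ≤ n - 1 := by omega
        have h3 := hpred (u - i.val) h1 h2
        rw [hsumeq] at h3
        have h4 := hshift i.val (u - i.val)
        rw [show i.val + (u - i.val) = u from by omega] at h4
        omega
    · intro hrec m hm1 hm2
      rw [hsumeq]
      have h1 : i.val + m < i.val + n := by omega
      have h2 := hrec (i.val + m) h1
      have h3 := hshift i.val m
      have h4 := hper i.val
      omega
  -- transfer to range n and apply counting lemma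
  have hmain := count_records n k hn hk1 G hper hstep
  refine Eq.trans ?_ hmain
  apply Finset.card_bij (fun i _ => i.val)
  · intro a ha
    rw [Finset.mem_filter] at ha
    rw [Finset.mem_filter, Finset.mem_range]
    exact ⟨a.isLt, (key a).mp ha.2⟩
  · intro a _ b _ hab
    exact Fin.val_injective hab
  · intro b hb
    rw [Finset.mem_filter, Finset.mem_range] at hb
    refine ⟨⟨b, hb.1⟩, ?_, rfl⟩
    rw [Finset.mem_filter]
    exact ⟨Finset.mem_univ _, (key ⟨b, hb.1⟩).mpr hb.2⟩
end

section
/- For a sequence $(s_0, \ldots, s_{n-1})$ of non-negative integers summing to $n-1$ (the case $k=1$), exactly one cyclic rotation satisfies: for all $0 \le m < n$, $\sum_{j=0}^{m} (s_j - 1) \ge 0$ when $m < n-1$, and the total sum of $s_j - 1$ equals $-1$. -/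
private def cycT (n : ℕ) (h : 0 < n) (s : Fin n → ℕ) (j : ℕ) : ℤ :=
  (s ⟨j % n, Nat.mod_lt _ h⟩ : ℤ) - 1

private def cycP (n : ℕ) (h : 0 < n) (s : Fin n → ℕ) (m : ℕ) : ℤ :=
  ∑ j ∈ Finset.range m, cycT n h s j

private lemma sum_range_shift_aux (n : ℕ) (f : ℕ → ℤ) (hf : ∀ j, f (j + n) = f j) (a : ℕ) :
    ∑ j ∈ Finset.range n, f (a + j) = ∑ j ∈ Finset.range n, f j := by
  induction a with
  | zero => simp
  | succ a ih =>
    have h1 := Finset.sum_range_succ' (fun j => f (a + j)) n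
    have h2 := Finset.sum_range_succ (fun j => f (a + j)) n
    have hfa : f (a + n) = f a := hf a
    have key : ∑ j ∈ Finset.range n, f (a + (j + 1)) = ∑ j ∈ Finset.range n, f (a + j) := by
      simp only [add_zero] at h1
      linarith
    calc ∑ j ∈ Finset.range n, f (a + 1 + j)
        = ∑ j ∈ Finset.range n, f (a + (j + 1)) := by
          refine Finset.sum_congr rfl fun j _ => ?_
          congr 1; omega
      _ = ∑ j ∈ Finset.range n, f (a + j) := key
      _ = _ := ih

private lemma cycT_per (n : ℕ) (h : 0 < n) (s : Fin n → ℕ) (j : ℕ) :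
    cycT n h s (j + n) = cycT n h s j := by
  simp [cycT, Nat.add_mod_right]

private lemma cycP_add (n : ℕ) (h : 0 < n) (s : Fin n → ℕ) (a m : ℕ) :
    cycP n h s (a + m) = cycP n h s a + ∑ j ∈ Finset.range m, cycT n h s (a + j) := by
  induction m with
  | zero => simp [cycP]
  | succ m ih =>
    rw [show a + (m + 1) = (a + m) + 1 by omega]
    rw [cycP, Finset.sum_range_succ, ← cycP, ih, Finset.sum_range_succ]
    ring

private lemma cyc_sum (n : ℕ) (h : 0 < n) (s : Fin n → ℕ) (hs : ∑ i, s i = n - 1) (a : ℕ) :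
    ∑ j ∈ Finset.range n, cycT n h s (a + j) = -1 := by
  rw [sum_range_shift_aux n _ (cycT_per n h s) a]
  have h1 : ∑ j ∈ Finset.range n, cycT n h s j = ∑ i : Fin n, ((s i : ℤ) - 1) := by
    rw [← Fin.sum_univ_eq_sum_range (fun j => cycT n h s j) n]
    refine Finset.sum_congr rfl fun i _ => ?_
    simp [cycT, Nat.mod_eq_of_lt i.isLt]
  have h2 : ∑ i : Fin n, ((s i : ℤ) - 1) = (((∑ i, s i : ℕ) : ℤ)) - n := by
    rw [Finset.sum_sub_distrib]
    push_cast
    simp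
  rw [h1, h2, hs]
  omega

/-- **Cycle lemma, case `k = 1`.** A sequence of `n` non-negative integers summing to
`n - 1` has exactly one cyclic rotation whose partial sums of `s_j - 1` are all
non-negative before the last step, the total sum being `-1`. -/
theorem cycle_lemma_one (n : ℕ) (hn : 1 ≤ n)
    (s : Fin n → ℕ) (hs : ∑ i, s i = n - 1) :
    (Finset.univ.filter (fun i : Fin n =>
      (∀ m : ℕ, m < n - 1 →
        0 ≤ ∑ j ∈ Finset.range (m + 1),
          ((s ⟨(i.val + j) % n, Nat.mod_lt _ (by omega)⟩ : ℤ) - 1)) ∧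
      (∑ j ∈ Finset.range n,
          ((s ⟨(i.val + j) % n, Nat.mod_lt _ (by omega)⟩ : ℤ) - 1)) = -1)).card = 1 := by
  classical
  have h : 0 < n := hn
  set P := cycP n h s with hPdef
  have hPadd := cycP_add n h s
  have hsum := cyc_sum n h s hs
  have hPper : ∀ a, P (a + n) = P a - 1 := by
    intro a; rw [hPdef, hPadd, hsum]; ring
  -- equivalence of the filter's first condition with "good"
  have good_iff : ∀ i : Fin n,
      ((∀ m : ℕ, m < n - 1 → 0 ≤ ∑ j ∈ Finset.range (m + 1), cycT n h s (i.val + j)) ↔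
       (∀ q, i.val < q → q < i.val + n → P i.val ≤ P q)) := by
    intro i
    constructor
    · intro H q hq1 hq2
      have hm : q - i.val - 1 < n - 1 := by omega
      have h1 := H (q - i.val - 1) hm
      have h2 := hPadd i.val (q - i.val - 1 + 1)
      rw [show i.val + (q - i.val - 1 + 1) = q by omega] at h2
      rw [← hPdef] at h2
      linarith
    · intro H m hm
      have h1 := H (i.val + m + 1) (by omega) (by omega)
      have h2 := hPadd i.val (m + 1)
      rw [show i.val + (m + 1) = i.val + m + 1 by omega] at h2
      rw [← hPdef] at h2
      linarith
  -- existence of the smallest argmin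
  obtain ⟨i₀, hi₀n, hi₀min, hi₀str⟩ :
      ∃ i, i < n ∧ (∀ q < n, P i ≤ P q) ∧ ∀ r < i, P i < P r := by
    obtain ⟨b, hb, hbmin⟩ := Finset.exists_min_image (Finset.range n) P
      ⟨0, Finset.mem_range.2 h⟩
    rw [Finset.mem_range] at hb
    have hpred : ∃ i, i < n ∧ ∀ q < n, P i ≤ P q :=
      ⟨b, hb, fun q hq => hbmin q (Finset.mem_range.2 hq)⟩
    obtain ⟨h1, h2⟩ := Nat.find_spec hpred
    refine ⟨Nat.find hpred, h1, h2, ?_⟩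
    intro r hr
    have hnot := Nat.find_min hpred hr
    push_neg at hnot
    obtain ⟨q, hq, hlt⟩ := hnot (by omega)
    exact lt_of_le_of_lt (h2 q hq) hlt
  have hgood : ∀ q, i₀ < q → q < i₀ + n → P i₀ ≤ P q := by
    intro q hq1 hq2
    rcases lt_or_ge q n with hqn | hqn
    · exact hi₀min q hqn
    · have hr : q - n < i₀ := by omega
      have hstr : P i₀ + 1 ≤ P (q - n) := Int.add_one_le_iff.mpr (hi₀str _ hr)
      have hper := hPper (q - n)
      rw [show q - n + n = q by omega] at hper
      linarith
  have huniq : ∀ i i' : ℕ, i' < n → i < i' →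
      (∀ q, i < q → q < i + n → P i ≤ P q) →
      (∀ q, i' < q → q < i' + n → P i' ≤ P q) → False := by
    intro i i' hi'n hii' g g'
    have h1 : P i ≤ P i' := g i' hii' (by omega)
    have h2 : P i' ≤ P (i + n) := g' (i + n) (by omega) (by omega)
    have h3 := hPper i
    linarith
  rw [Finset.card_eq_one]
  refine ⟨⟨i₀, hi₀n⟩, ?_⟩
  ext x
  simp only [Finset.mem_filter, Finset.mem_univ, true_and, Finset.mem_singleton]
  constructor
  · rintro ⟨H1, -⟩
    have gx : ∀ q, x.val < q → q < x.val + n → P x.val ≤ P q := (good_iff x).1 H1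
    have hx : x.val = i₀ := by
      rcases lt_trichotomy x.val i₀ with hlt | heq | hgt
      · exact absurd (huniq x.val i₀ hi₀n hlt gx hgood) (fun f => f)
      · exact heq
      · exact absurd (huniq i₀ x.val x.isLt hgt hgood gx) (fun f => f)
    exact Fin.ext hx
  · rintro rfl
    exact ⟨(good_iff ⟨i₀, hi₀n⟩).2 hgood, hsum i₀⟩
end

section
/- Let each individual in a Galton–Watson branching process produce offspring according to a distribution $(r_s)_{s \ge 0}$ on the non-negative integers, starting with $k$ initial individuals, and let $Z$ denote the total progeny (including the initial individuals). Then for every $n \ge k$, $P(Z = n) = \frac{k}{n} \, P(X_1 + \cdots + X_n = n - k)$, where $X_1, \ldots, X_n$ are i.i.d. with distribution $(r_s)$. -/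
open scoped ENNReal

/-- The exploration walk after `m` steps: starting at `k`, the walk of a branching
process started from `k` individuals moves by `x_i - 1` at each step; `walkSum n x m`
is the displacement `∑_{i<m} (x_i - 1)`. -/
def walkSum (n : ℕ) (x : Fin n → ℕ) (m : ℕ) : ℤ :=
  ∑ i ∈ Finset.univ.filter (fun i : Fin n => (i : ℕ) < m), ((x i : ℤ) - 1)

/-- The event that the total progeny of a branching process started from `k`
individuals, with offspring counts `x_0, x_1, …` in exploration (depth-first) order,
equals `n`: the exploration walk started at `k` first hits `0` at time `n`. -/
def progenyEvent (k n : ℕ) (x : Fin n → ℕ) : Prop :=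
  (∀ m : ℕ, m < n → -(k : ℤ) < walkSum n x m) ∧ walkSum n x n = -(k : ℤ)

instance (k n : ℕ) : DecidablePred (progenyEvent k n) := fun _ => by
  unfold progenyEvent; infer_instance

/-- The probability that the total progeny of a branching process started from `k`
individuals with offspring distribution `r` equals `n`. -/
noncomputable def progenyProb (r : ℕ → ℝ≥0∞) (k n : ℕ) : ℝ≥0∞ :=
  ∑' x : Fin n → ℕ, if progenyEvent k n x then ∏ i, r (x i) else 0

/-!
By the cycle lemma of Dvoretzky and Motzkin, if `x₀, …, x_{n-1}` sum to `n - k`, exactly `k` of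
the `n` cyclic rotations of `x` have an exploration walk (steps `xᵢ - 1`) that stays above `-k`
before time `n`, i.e. describe a forest with total progeny `n`; otherwise none does. Rotations
preserve the product weight `∏ r (xᵢ)`, so summing over all rotations gives
`n · P(Z = n) = k · P(X₁ + ⋯ + Xₙ = n - k)`.
-/

open Finset

section CycleLemma

variable {S : ℕ → ℤ} {n k : ℕ}

theorem exists_first_passage (hstep : ∀ t, S t - 1 ≤ S (t + 1)) {v : ℤ} (hv : v ≤ S 0)
    {t₀ : ℕ} (ht₀ : S t₀ ≤ v) : ∃ j ≤ t₀, S j = v ∧ ∀ t < j, v < S t := by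
  classical
  have hex : ∃ j, S j ≤ v := ⟨t₀, ht₀⟩
  refine ⟨Nat.find hex, Nat.find_min' hex ht₀, ?_, fun t ht => not_le.1 (Nat.find_min hex ht)⟩
  have hle := Nat.find_spec hex
  rcases h : Nat.find hex with _ | t
  · rw [h] at hle
    omega
  · rw [h] at hle
    have := Nat.find_min hex (show t < Nat.find hex by omega)
    have := hstep t
    omega

theorem forall_sub_lt_iff_lowerRecord (hper : ∀ t, S (t + n) = S t - k) {t₀ : ℕ} (ht₀ : t₀ < n)
    (hmin : ∀ t < n, S t₀ ≤ S t) {j : ℕ} (hj : j < n) :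
    (∀ m < n, S j - k < S (j + m)) ↔ (∀ t < j, S j < S t) ∧ S j < S t₀ + k := by
  constructor
  · intro h
    have hrec : ∀ t < j, S j < S t := fun t ht => by
      have := h (n + t - j) (by omega)
      rw [show j + (n + t - j) = t + n by omega, hper] at this
      omega
    refine ⟨hrec, ?_⟩
    by_cases hjt : j ≤ t₀
    · have := h (t₀ - j) (by omega)
      rw [show j + (t₀ - j) = t₀ by omega] at this
      omega
    · have := hrec t₀ (by omega)
      omega
  · rintro ⟨hrec, hlt⟩ m hm
    by_cases hjm : j + m < n
    · have := hmin (j + m) hjm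
      omega
    · have := hrec (j + m - n) (by omega)
      rw [show j + m = (j + m - n) + n by omega, hper]
      omega

theorem cycle_lemma_s4 (hstep : ∀ t, S t - 1 ≤ S (t + 1)) (hper : ∀ t, S (t + n) = S t - k)
    (hk : 1 ≤ k) : #{j ∈ range n | ∀ m < n, S j - k < S (j + m)} = k := by
  have hn : n ≠ 0 := by
    rintro rfl
    have := hper 0
    rw [add_zero] at this
    omega
  obtain ⟨t₀, ht₀, hmin⟩ := exists_min_image (range n) S (nonempty_range_iff.2 hn)
  simp only [mem_range] at ht₀ hmin
  have hmin_add : S t₀ + k ≤ S 0 + 1 := by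
    have := hstep (n - 1)
    rw [show n - 1 + 1 = 0 + n by omega, hper] at this
    have := hmin (n - 1) (by omega)
    omega
  -- Good starting points are the lower records of `S` below `S t₀ + k`; as `S` steps down by
  -- at most one, `S` maps them bijectively onto `[S t₀, S t₀ + k)`.
  rw [filter_congr fun j hj => forall_sub_lt_iff_lowerRecord hper ht₀ hmin (mem_range.1 hj)]
  calc #{j ∈ range n | (∀ t < j, S j < S t) ∧ S j < S t₀ + k}
      = #(Ico (S t₀) (S t₀ + k)) := by
        refine card_bij (fun j _ => S j) ?_ ?_ ?_
        · intro j hj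
          simp only [mem_filter, mem_range] at hj
          exact mem_Ico.2 ⟨hmin j hj.1, hj.2.2⟩
        · intro j₁ hj₁ j₂ hj₂ he
          simp only [mem_filter, mem_range] at hj₁ hj₂
          rcases lt_trichotomy j₁ j₂ with h | h | h
          · exact absurd he (hj₂.2.1 j₁ h).ne'
          · exact h
          · exact absurd he (hj₁.2.1 j₂ h).ne
        · intro v hv
          rw [mem_Ico] at hv
          obtain ⟨j, hjt, rfl, hfirst⟩ :=
            exists_first_passage hstep (v := v) (by omega) (t₀ := t₀) (by omega)
          exact ⟨j, mem_filter.2 ⟨mem_range.2 (by omega), hfirst, hv.2⟩, rfl⟩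
    _ = k := by simp

end CycleLemma

section ExplorationWalk

variable {n : ℕ} [NeZero n]

/-- The exploration walk of the offspring counts `x` repeated periodically, so that the walk of
every rotation of `x` is an increment of it. -/
def cyclicWalk (x : Fin n → ℕ) (t : ℕ) : ℤ :=
  ∑ i ∈ range t, ((x (Fin.ofNat n i) : ℤ) - 1)

theorem cyclicWalk_succ (x : Fin n → ℕ) (t : ℕ) :
    cyclicWalk x (t + 1) = cyclicWalk x t + ((x (Fin.ofNat n t) : ℤ) - 1) :=
  sum_range_succ _ _

theorem sub_one_le_cyclicWalk_succ (x : Fin n → ℕ) (t : ℕ) :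
    cyclicWalk x t - 1 ≤ cyclicWalk x (t + 1) := by
  rw [cyclicWalk_succ]
  omega

theorem cyclicWalk_self (x : Fin n → ℕ) : cyclicWalk x n = (∑ i, x i : ℕ) - n := by
  rw [cyclicWalk, ← Fin.sum_univ_eq_sum_range (fun i => (x (Fin.ofNat n i) : ℤ) - 1)]
  simp

theorem cyclicWalk_add_period (x : Fin n → ℕ) (t : ℕ) :
    cyclicWalk x (t + n) = cyclicWalk x t + ((∑ i, x i : ℕ) - n) := by
  induction t with
  | zero => rw [zero_add, cyclicWalk_self, cyclicWalk, sum_range_zero, zero_add]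
  | succ t ih =>
    have hmod : Fin.ofNat n (t + n) = Fin.ofNat n t := Fin.ext (by simp)
    rw [add_right_comm, cyclicWalk_succ, ih, hmod, cyclicWalk_succ]
    ring

theorem cyclicWalk_comp_addRight (x : Fin n → ℕ) (j : Fin n) (m : ℕ) :
    cyclicWalk (x ∘ Equiv.addRight j) m = cyclicWalk x (j + m) - cyclicWalk x j := by
  have hrot : ∀ i, Fin.ofNat n i + j = Fin.ofNat n (j + i) :=
    fun i => Fin.ext (by simp [Fin.val_add, Nat.add_comm])
  simp only [cyclicWalk, sum_range_add, Function.comp_apply, Equiv.coe_addRight, hrot,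
    add_sub_cancel_left]

theorem walkSum_eq_cyclicWalk (y : Fin n → ℕ) {m : ℕ} (hm : m ≤ n) :
    walkSum n y m = cyclicWalk y m := by
  have hrange : {i ∈ range n | i < m} = range m := by
    ext i
    simp only [mem_filter, mem_range]
    omega
  rw [walkSum, sum_filter, cyclicWalk, ← hrange, sum_filter,
    ← Fin.sum_univ_eq_sum_range (fun i => if i < m then (y (Fin.ofNat n i) : ℤ) - 1 else 0)]
  simp only [Fin.ofNat_val_eq_self]

end ExplorationWalk

section Rotations

variable {n k : ℕ} [NeZero n]

theorem sum_eq_of_progenyEvent {y : Fin n → ℕ} (h : progenyEvent k n y) :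
    ∑ i, y i = n - k := by
  have hwalk := h.2
  rw [walkSum_eq_cyclicWalk y le_rfl, cyclicWalk_self] at hwalk
  omega

theorem progenyEvent_comp_addRight_iff {x : Fin n → ℕ} (hsum : ∑ i, x i = n - k) (hkn : k ≤ n)
    (j : Fin n) :
    progenyEvent k n (x ∘ Equiv.addRight j) ↔
      ∀ m < n, cyclicWalk x j - k < cyclicWalk x (j + m) := by
  have hper : cyclicWalk x (j + n) = cyclicWalk x j - k := by
    rw [cyclicWalk_add_period, hsum]
    omega
  simp only [progenyEvent, walkSum_eq_cyclicWalk _ le_rfl, cyclicWalk_comp_addRight, hper]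
  constructor
  · rintro ⟨h, -⟩ m hm
    have := h m hm
    rw [walkSum_eq_cyclicWalk _ hm.le, cyclicWalk_comp_addRight] at this
    omega
  · intro h
    refine ⟨fun m hm => ?_, by ring⟩
    rw [walkSum_eq_cyclicWalk _ hm.le, cyclicWalk_comp_addRight]
    have := h m hm
    omega

theorem card_filter_progenyEvent_comp_addRight (hk : 1 ≤ k) (hkn : k ≤ n) (x : Fin n → ℕ) :
    #{j : Fin n | progenyEvent k n (x ∘ Equiv.addRight j)} =
      if ∑ i, x i = n - k then k else 0 := by
  split_ifs with hsum
  · have hper : ∀ t, cyclicWalk x (t + n) = cyclicWalk x t - k := fun t => by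
      rw [cyclicWalk_add_period, hsum]
      omega
    rw [filter_congr fun j _ => progenyEvent_comp_addRight_iff hsum hkn j, card_filter,
      Fin.sum_univ_eq_sum_range
        (fun j => if ∀ m < n, cyclicWalk x j - k < cyclicWalk x (j + m) then 1 else 0),
      ← card_filter]
    exact cycle_lemma_s4 (sub_one_le_cyclicWalk_succ x) hper hk
  · rw [card_eq_zero, filter_eq_empty_iff]
    intro j _ hj
    apply hsum
    rw [← sum_eq_of_progenyEvent hj]
    exact (Equiv.sum_comp (Equiv.addRight j) x).symm

theorem progenyProb_eq_tsum_comp_addRight (r : ℕ → ℝ≥0∞) (j : Fin n) :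
    progenyProb r k n = ∑' x : Fin n → ℕ,
      if progenyEvent k n (x ∘ Equiv.addRight j) then ∏ i, r (x i) else 0 := by
  rw [progenyProb, ← (Equiv.arrowCongr (Equiv.addRight j).symm (Equiv.refl ℕ)).tsum_eq]
  refine tsum_congr fun x => ?_
  exact if_congr Iff.rfl (Equiv.prod_comp (Equiv.addRight j) (fun i => r (x i))) rfl

theorem natCast_mul_progenyProb (r : ℕ → ℝ≥0∞) (hk : 1 ≤ k) (hkn : k ≤ n) :
    (n : ℝ≥0∞) * progenyProb r k n =
      k * ∑' x : Fin n → ℕ, if ∑ i, x i = n - k then ∏ i, r (x i) else 0 := by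
  calc (n : ℝ≥0∞) * progenyProb r k n
      = ∑ j : Fin n, ∑' x : Fin n → ℕ,
          if progenyEvent k n (x ∘ Equiv.addRight j) then ∏ i, r (x i) else 0 := by
        simp only [← progenyProb_eq_tsum_comp_addRight, sum_const, card_univ, Fintype.card_fin,
          nsmul_eq_mul]
    _ = ∑' x : Fin n → ℕ,
          #{j : Fin n | progenyEvent k n (x ∘ Equiv.addRight j)} * ∏ i, r (x i) := by
        rw [← Summable.tsum_finsetSum fun _ _ => ENNReal.summable]
        refine tsum_congr fun x => ?_
        rw [← sum_filter, sum_const, nsmul_eq_mul]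
    _ = _ := by
        rw [← ENNReal.tsum_mul_left]
        refine tsum_congr fun x => ?_
        rw [card_filter_progenyEvent_comp_addRight hk hkn x]
        split_ifs <;> simp

end Rotations

theorem dwass_general (r : ℕ → ℝ≥0∞) (k n : ℕ)
    (hk : 1 ≤ k) (hn : k ≤ n) :
    progenyProb r k n =
      (k : ℝ≥0∞) / (n : ℝ≥0∞) *
        ∑' x : Fin n → ℕ, if (∑ i, x i) = n - k then ∏ i, r (x i) else 0 := by
  have : NeZero n := ⟨by omega⟩
  rw [← ENNReal.mul_div_right_comm, ENNReal.eq_div_iff (Nat.cast_ne_zero.2 (NeZero.ne n))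
    (ENNReal.natCast_ne_top n)]
  exact natCast_mul_progenyProb r hk hn

/-- **Dwass's theorem.** For a Galton–Watson branching process started from `k`
individuals with offspring distribution `r`, for every `n ≥ k` the probability that the
total progeny equals `n` is `k/n` times the probability that `n` i.i.d. draws from the
offspring distribution sum to `n - k`. -/
theorem dwass (r : ℕ → ℝ≥0∞) (hr : ∑' s, r s = 1) (k n : ℕ)
    (hk : 1 ≤ k) (hn : k ≤ n) :
    progenyProb r k n =
      (k : ℝ≥0∞) / (n : ℝ≥0∞) *
        ∑' x : Fin n → ℕ, if (∑ i, x i) = n - k then ∏ i, r (x i) else 0 :=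
  dwass_general r k n hk hn
end

section
/- Let $\mu(z) = \sum_{s \ge 0} r_s z^s$ be the probability generating function of the offspring distribution of a Galton–Watson process started with $k$ individuals. Then the probability that the total progeny equals $n$ is $\frac{k}{n}$ times the coefficient of $z^{n-k}$ in $[\mu(z)]^n$. -/
/-!
Rotating an offspring sequence `x : Fin n → ℕ` cyclically preserves its weight `∏ r (x i)` and
its sum. By the cycle lemma, if `∑ x = n - k` then exactly `k` of the `n` rotations have an
exploration walk that first reaches `-k` at time `n`: these rotations are the record lows, in the
second period, of the periodically extended walk, one for each of the `k` levels it newly reaches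
there. Double counting over rotations gives `n · P(progeny = n) = k · [z^(n-k)] μ(z)^n`.
-/

open scoped ENNReal

open Finset

section RecordLows

variable {S : ℕ → ℤ} {n k : ℕ}

def IsRecordLow (S : ℕ → ℤ) (t : ℕ) : Prop := ∀ i < t, S t < S i

instance (S : ℕ → ℤ) : DecidablePred (IsRecordLow S) := fun _ => by
  unfold IsRecordLow; infer_instance

lemma exists_first_hit (hstep : ∀ i, S i - 1 ≤ S (i + 1)) {v : ℤ} (h0 : v ≤ S 0) {q : ℕ}
    (hq : S q ≤ v) : ∃ τ ≤ q, S τ = v ∧ IsRecordLow S τ := by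
  have hex : ∃ t, S t ≤ v := ⟨q, hq⟩
  have hbefore : ∀ i < Nat.find hex, v < S i := fun i hi => not_le.1 (Nat.find_min hex hi)
  have hhit : S (Nat.find hex) = v := by
    refine le_antisymm (Nat.find_spec hex) ?_
    rcases h : Nat.find hex with _ | t
    · exact h0
    · have := hbefore t (by omega)
      have := hstep t
      omega
  exact ⟨Nat.find hex, Nat.find_min' hex hq, hhit, fun i hi => by rw [hhit]; exact hbefore i hi⟩

lemma forall_lt_shift_iff_isRecordLow (hper : ∀ i, S (i + n) = S i - k) {j : ℕ} (hj : j ≤ n) :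
    (∀ m < n, S (j + n) < S (j + m)) ↔ IsRecordLow S (j + n) := by
  refine ⟨fun h i hi => ?_, fun h m hm => h _ (by omega)⟩
  rcases le_or_gt j i with hji | hij
  · simpa [Nat.add_sub_cancel' hji] using h (i - j) (by omega)
  · have := h (i + n - j) (by omega)
    rw [Nat.add_sub_cancel' (by omega), hper i] at this
    omega

theorem card_isRecordLow (hstep : ∀ i, S i - 1 ≤ S (i + 1)) (hper : ∀ i, S (i + n) = S i - k)
    (hn : 0 < n) : #{j : Fin n | IsRecordLow S (j + n)} = k := by
  obtain ⟨m₀, hm₀, hmin⟩ := exists_min_image (range n) S ⟨0, mem_range.2 hn⟩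
  rw [mem_range] at hm₀
  replace hmin : ∀ i < n, S m₀ ≤ S i := fun i hi => hmin i (mem_range.2 hi)
  have hcard : #(Icc (S m₀ - k) (S m₀ - 1)) = k := by rw [Int.card_Icc]; omega
  rw [← hcard]
  -- record lows are strictly decreasing in value, and every level below the first period's
  -- minimum is first hit at a record low
  refine card_nbij (fun j => S (j + n)) (fun j hj => ?_) (fun j₁ hj₁ j₂ hj₂ h => ?_) ?_
  · simp only [coe_filter, Set.mem_ofPred_eq, mem_univ, true_and] at hj
    have := hj m₀ (by omega)
    have := hmin j j.isLt
    simp only [coe_Icc, Set.mem_Icc]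
    rw [hper] at *
    omega
  · simp only [coe_filter, Set.mem_ofPred_eq, mem_univ, true_and] at hj₁ hj₂
    simp only at h
    by_contra hne
    rcases lt_or_gt_of_ne (Fin.val_ne_of_ne hne) with hlt | hlt
    · exact (hj₂ (j₁ + n) (by omega)).ne h.symm
    · exact (hj₁ (j₂ + n) (by omega)).ne h
  · intro v hv
    simp only [coe_Icc, Set.mem_Icc] at hv
    obtain ⟨τ, hτq, hτv, hτrec⟩ :=
      exists_first_hit hstep (v := v) (q := m₀ + n) (by have := hmin 0 hn; omega)
        (by rw [hper]; omega)
    have hτn : n ≤ τ := by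
      by_contra! hτn
      have := hmin τ hτn
      omega
    refine ⟨⟨τ - n, by omega⟩, ?_, ?_⟩
    · simpa [Nat.sub_add_cancel hτn] using hτrec
    · simp [Nat.sub_add_cancel hτn, hτv]

end RecordLows

section PeriodicWalk

open Fin.NatCast

variable {n : ℕ} [NeZero n]

def periodicWalk (l : Fin n → ℕ) (i : ℕ) : ℤ := ∑ t ∈ range i, ((l t : ℤ) - 1)

lemma periodicWalk_succ (l : Fin n → ℕ) (i : ℕ) :
    periodicWalk l (i + 1) = periodicWalk l i + ((l i : ℤ) - 1) :=
  sum_range_succ _ _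

lemma periodicWalk_sub_one_le (l : Fin n → ℕ) (i : ℕ) :
    periodicWalk l i - 1 ≤ periodicWalk l (i + 1) := by
  rw [periodicWalk_succ]
  omega

lemma walkSum_eq_sum_range (x : Fin n → ℕ) {m : ℕ} (hm : m ≤ n) :
    walkSum n x m = ∑ t ∈ range m, ((x t : ℤ) - 1) := by
  rw [walkSum, sum_filter]
  calc ∑ i : Fin n, (if (i : ℕ) < m then (x i : ℤ) - 1 else 0)
      = ∑ i ∈ range n, if i < m then (x i : ℤ) - 1 else 0 := by
        simpa using Fin.sum_univ_eq_sum_range (fun i => if i < m then ((x i : ℤ) - 1) else 0) n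
    _ = ∑ t ∈ range m, ((x t : ℤ) - 1) := by
        rw [← sum_filter]
        congr 1
        ext i
        simp only [mem_filter, mem_range]
        omega

lemma periodicWalk_period (l : Fin n → ℕ) : periodicWalk l n = walkSum n l n := by
  rw [walkSum_eq_sum_range l le_rfl, periodicWalk]

lemma periodicWalk_add_period (l : Fin n → ℕ) (i : ℕ) :
    periodicWalk l (i + n) = periodicWalk l i + walkSum n l n := by
  induction i with
  | zero => rw [zero_add, periodicWalk_period]; simp [periodicWalk]
  | succ i ih =>
    rw [Nat.add_right_comm, periodicWalk_succ, ih, periodicWalk_succ]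
    simp only [Nat.cast_add, Fin.natCast_self, add_zero]
    ring

lemma walkSum_rotate (l : Fin n → ℕ) (j : Fin n) {m : ℕ} (hm : m ≤ n) :
    walkSum n (fun i => l (i + j)) m = periodicWalk l (j + m) - periodicWalk l j := by
  rw [walkSum_eq_sum_range _ hm, periodicWalk, periodicWalk, sum_range_add, add_sub_cancel_left]
  refine sum_congr rfl fun t _ => ?_
  rw [Nat.cast_add, Fin.cast_val_eq_self, add_comm]

end PeriodicWalk

lemma walkSum_self {n : ℕ} (x : Fin n → ℕ) : walkSum n x n = ∑ i, (x i : ℤ) - n := by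
  simp [walkSum, sum_sub_distrib]

lemma progenyEvent.sum_add {k n : ℕ} {x : Fin n → ℕ} (h : progenyEvent k n x) :
    ∑ i, x i + k = n := by
  have := h.2
  rw [walkSum_self, ← Nat.cast_sum] at this
  omega

section Rotations

variable {k n : ℕ} [NeZero n] {l : Fin n → ℕ}

lemma periodicWalk_add_period_of_sum (hl : ∑ i, l i + k = n) (i : ℕ) :
    periodicWalk l (i + n) = periodicWalk l i - k := by
  rw [periodicWalk_add_period, walkSum_self, ← Nat.cast_sum]
  omega

lemma progenyEvent_rotate_iff (hl : ∑ i, l i + k = n) (j : Fin n) :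
    progenyEvent k n (fun i => l (i + j)) ↔ IsRecordLow (periodicWalk l) (j + n) := by
  have hper := periodicWalk_add_period_of_sum hl
  rw [← forall_lt_shift_iff_isRecordLow hper j.isLt.le, progenyEvent,
    walkSum_rotate l j le_rfl, hper]
  refine ⟨fun h m hm => ?_, fun h => ⟨fun m hm => ?_, by ring⟩⟩
  · have := h.1 m hm
    rw [walkSum_rotate l j hm.le] at this
    omega
  · have := h m hm
    rw [walkSum_rotate l j hm.le]
    omega

lemma card_rotate_progenyEvent (hl : ∑ i, l i + k = n) :
    #{j : Fin n | progenyEvent k n (fun i => l (i + j))} = k := by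
  simp_rw [progenyEvent_rotate_iff hl]
  exact card_isRecordLow (periodicWalk_sub_one_le l) (periodicWalk_add_period_of_sum hl)
    (NeZero.pos n)

end Rotations

lemma PowerSeries.coeff_mk_pow {R : Type*} [CommSemiring R] (r : ℕ → R) (n d : ℕ) :
    coeff d (mk r ^ n) = ∑ l ∈ Nat.antidiagonalTuple n d, ∏ i, r (l i) := by
  rw [← Fin.prod_const, coeff_prod]
  refine sum_nbij' (fun g i => g i) (fun f => Finsupp.equivFunOnFinite.symm f) ?_ ?_
    (fun g _ => Finsupp.equivFunOnFinite.symm_apply_apply g) (fun _ _ => rfl) (fun _ _ => by simp)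
  · intro g hg
    simp_all [mem_finsuppAntidiag, Finset.Nat.mem_antidiagonalTuple]
  · intro f hf
    simp_all [mem_finsuppAntidiag, Finset.Nat.mem_antidiagonalTuple]

lemma sum_antidiagonalTuple_comp_perm {M : Type*} [AddCommMonoid M] (n d : ℕ)
    (σ : Equiv.Perm (Fin n)) (f : (Fin n → ℕ) → M) :
    ∑ l ∈ Nat.antidiagonalTuple n d, f (fun i => l (σ i)) =
      ∑ l ∈ Nat.antidiagonalTuple n d, f l := by
  refine sum_nbij' (fun l i => l (σ i)) (fun l i => l (σ.symm i)) ?_ ?_ ?_ ?_ (fun _ _ => rfl)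
  · intro l hl
    rw [Finset.Nat.mem_antidiagonalTuple] at *
    rwa [Equiv.sum_comp σ l]
  · intro l hl
    rw [Finset.Nat.mem_antidiagonalTuple] at *
    rwa [Equiv.sum_comp σ.symm l]
  · intro l _
    simp
  · intro l _
    simp

lemma progenyProb_eq_sum (r : ℕ → ℝ≥0∞) (k n : ℕ) :
    progenyProb r k n = ∑ l ∈ Nat.antidiagonalTuple n (n - k),
      if progenyEvent k n l then ∏ i, r (l i) else 0 :=
  tsum_eq_sum fun x hx => if_neg fun h =>
    hx (Finset.Nat.mem_antidiagonalTuple.2 (by have := h.sum_add; omega))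

lemma natCast_mul_sum_progenyEvent {R : Type*} [CommSemiring R] (r : ℕ → R) {k n : ℕ}
    [NeZero n] (hkn : k ≤ n) :
    (n : R) * ∑ l ∈ Nat.antidiagonalTuple n (n - k),
        (if progenyEvent k n l then ∏ i, r (l i) else 0) =
      k * ∑ l ∈ Nat.antidiagonalTuple n (n - k), ∏ i, r (l i) := by
  set T := Nat.antidiagonalTuple n (n - k)
  calc (n : R) * ∑ l ∈ T, (if progenyEvent k n l then ∏ i, r (l i) else 0)
      = ∑ j : Fin n, ∑ l ∈ T, (if progenyEvent k n l then ∏ i, r (l i) else 0) := by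
        simp
    _ = ∑ j : Fin n, ∑ l ∈ T,
          (if progenyEvent k n (fun i => l (i + j)) then ∏ i, r (l i) else 0) := by
        refine sum_congr rfl fun j _ => ?_
        rw [← sum_antidiagonalTuple_comp_perm n (n - k) (Equiv.addRight j)]
        refine sum_congr rfl fun l _ => ?_
        rw [Equiv.prod_comp (Equiv.addRight j) fun i => r (l i)]
        rfl
    _ = ∑ l ∈ T, #{j : Fin n | progenyEvent k n (fun i => l (i + j))} * ∏ i, r (l i) := by
        rw [sum_comm]
        simp [sum_ite]
    _ = k * ∑ l ∈ T, ∏ i, r (l i) := by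
        rw [mul_sum]
        refine sum_congr rfl fun l hl => ?_
        rw [card_rotate_progenyEvent (by rw [Finset.Nat.mem_antidiagonalTuple.1 hl]; omega)]

theorem dwass_pgf_general (r : ℕ → ℝ≥0∞) (k n : ℕ)
    (hk : 1 ≤ k) (hn : k ≤ n) :
    progenyProb r k n =
      (k : ℝ≥0∞) / (n : ℝ≥0∞) *
        PowerSeries.coeff (R := ℝ≥0∞) (n - k) ((PowerSeries.mk r) ^ n) := by
  have : NeZero n := ⟨by omega⟩
  rw [← ENNReal.mul_div_right_comm, ENNReal.eq_div_iff (NeZero.ne _) (ENNReal.natCast_ne_top n),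
    progenyProb_eq_sum, PowerSeries.coeff_mk_pow]
  exact natCast_mul_sum_progenyEvent r hn

/-- **Dwass's theorem, PGF form.** If `μ(z) = ∑ r_s z^s` is the probability generating
function of the offspring distribution of a Galton–Watson process started with `k`
individuals, then the probability that the total progeny equals `n` is `k/n` times the
coefficient of `z^(n-k)` in `μ(z)^n`. -/
theorem dwass_pgf (r : ℕ → ℝ≥0∞) (hr : ∑' s, r s = 1) (k n : ℕ)
    (hk : 1 ≤ k) (hn : k ≤ n) :
    progenyProb r k n =
      (k : ℝ≥0∞) / (n : ℝ≥0∞) *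
        PowerSeries.coeff (R := ℝ≥0∞) (n - k) ((PowerSeries.mk r) ^ n) :=
  dwass_pgf_general r k n hk hn
end

section
/- In the $\xi$ algorithm, each edge is added between two nodes that are in different connected components of the current graph (no edge ever creates a cycle), because every edge joins two unprocessed nodes and no path exists between distinct unprocessed nodes at any stage. -/
/-!
Every edge `(a, b)` added at a step joins a node `b` that leaves the ring at that step to its
predecessor `a`, which stays. Hence the number of stages at which a node is still in the ring
(its `lifetime`) strictly decreases from parent to child, and each node has at most one parent.
In the graph generated by such a relation, a vertex of minimal rank on a cycle, or in the
interior of a path, has two distinct neighbours of larger rank, and both would be its unique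
parent. A path between two distinct unprocessed nodes cannot have its minimum at an endpoint
either: unprocessed nodes have no parent, so their neighbours are children, of smaller rank.
-/

/-- Index of the previous position on a ring of `n` positions. -/
def prevIdx (n p : ℕ) : ℕ := (p + n - 1) % n

/-- A position `p` of the ring `r` of (label, counter) pairs qualifies for processing:
its counter is `0` and the counter of the previous unprocessed node is positive. -/
def qual (r : List (ℕ × ℕ)) (p : ℕ) : Bool :=
  ((r.getD p (0, 0)).2 == 0) && ((r.getD (prevIdx r.length p) (0, 0)).2 != 0)

/-- One simultaneous step of the ξ algorithm: returns the list of (parent, child) edges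
added in this step, and the new ring (qualifying nodes removed, their predecessors'
counters decremented). -/
def xiStep (r : List (ℕ × ℕ)) : List (ℕ × ℕ) × List (ℕ × ℕ) :=
  ((List.range r.length).filterMap fun p =>
      if qual r p then
        some ((r.getD (prevIdx r.length p) (0, 0)).1, (r.getD p (0, 0)).1)
      else none,
   (List.range r.length).filterMap fun p =>
      if qual r p then none
      else some ((r.getD p (0, 0)).1,
        if qual r ((p + 1) % r.length) then (r.getD p (0, 0)).2 - 1
        else (r.getD p (0, 0)).2))

/-- Iterate the ξ algorithm with the given fuel, stopping when no pair qualifies.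
Returns the accumulated (parent, child) edges and the final ring. -/
def xiAux : ℕ → List (ℕ × ℕ) → List (ℕ × ℕ) × List (ℕ × ℕ)
  | 0, r => ([], r)
  | t + 1, r =>
    let st := xiStep r
    if st.1 = [] then ([], r)
    else
      let rest := xiAux t st.2
      (st.1 ++ rest.1, rest.2)

/-- Run the ξ algorithm on a ring of (label, counter) pairs. -/
def xiRun (r : List (ℕ × ℕ)) : List (ℕ × ℕ) × List (ℕ × ℕ) := xiAux r.length r

/-- The ξ construction applied to a sequence of offspring counts, the node labels being
the positions `0, …, n-1` in the sequence. -/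
def xi (s : List ℕ) : List (ℕ × ℕ) × List (ℕ × ℕ) := xiRun (s.zipIdx.map Prod.swap)

/-- The ring of unprocessed nodes after `t` iterations of the ξ algorithm. -/
def ringIter (r : List (ℕ × ℕ)) : ℕ → List (ℕ × ℕ)
  | 0 => r
  | t + 1 => (xiStep (ringIter r t)).2

/-- The edges added during the first `t` iterations of the ξ algorithm. -/
def edgesIter (r : List (ℕ × ℕ)) : ℕ → List (ℕ × ℕ)
  | 0 => []
  | t + 1 => edgesIter r t ++ (xiStep (ringIter r t)).1

namespace SimpleGraph

variable {V α : Type*} [LinearOrder α] {R : V → V → Prop} {g : V → α}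

lemma rel_of_fromRel_adj_of_le (hg : ∀ ⦃a b⦄, R a b → g b < g a) {u w : V}
    (h : (fromRel R).Adj u w) (hle : g u ≤ g w) : R w u :=
  ((fromRel_adj R u w).1 h).2.resolve_left fun huw => (hg huw).not_ge hle

lemma eq_of_fromRel_adj_of_le (hg : ∀ ⦃a b⦄, R a b → g b < g a)
    (huniq : ∀ ⦃a a' b⦄, R a b → R a' b → a = a') {u x y : V}
    (hx : (fromRel R).Adj u x) (hy : (fromRel R).Adj u y) (hux : g u ≤ g x) (huy : g u ≤ g y) :
    x = y :=
  huniq (rel_of_fromRel_adj_of_le hg hx hux) (rel_of_fromRel_adj_of_le hg hy huy)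

lemma Walk.exists_mem_support_forall_le {G : SimpleGraph V} {a b : V} (p : G.Walk a b)
    (g : V → α) :
    ∃ u ∈ p.support, ∀ w ∈ p.support, g u ≤ g w := by
  classical
  simpa using p.support.toFinset.exists_min_image g ⟨a, by simp⟩

lemma isAcyclic_fromRel_of_rank (hg : ∀ ⦃a b⦄, R a b → g b < g a)
    (huniq : ∀ ⦃a a' b⦄, R a b → R a' b → a = a') : (fromRel R).IsAcyclic := by
  classical
  intro v c hc
  obtain ⟨u, hu, hmin⟩ := c.exists_mem_support_forall_le g
  set c' := c.rotate u hu
  have hc' : c'.IsCycle := hc.rotate hu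
  have hmin' : ∀ w ∈ c'.support, g u ≤ g w := fun w hw =>
    hmin w ((c.mem_support_rotate_iff u hu).1 hw)
  refine hc'.snd_ne_penultimate (eq_of_fromRel_adj_of_le hg huniq ?_ ?_
    (hmin' _ (c'.getVert_mem_support _)) (hmin' _ (c'.getVert_mem_support _)))
  · exact c'.adj_snd hc'.not_nil
  · exact (c'.adj_penultimate hc'.not_nil).symm

lemma not_reachable_fromRel_of_rank (hg : ∀ ⦃a b⦄, R a b → g b < g a)
    (huniq : ∀ ⦃a a' b⦄, R a b → R a' b → a = a') {i j : V}
    (hi : ∀ a, ¬ R a i) (hj : ∀ a, ¬ R a j) (hij : i ≠ j) :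
    ¬ (fromRel R).Reachable i j := by
  classical
  rintro ⟨w⟩
  obtain ⟨p, hp⟩ := w.toPath
  obtain ⟨u, hu, hmin⟩ := p.exists_mem_support_forall_le g
  obtain ⟨n, rfl, hn⟩ := p.mem_support_iff_exists_getVert.1 hu
  have hmin' : ∀ m, g (p.getVert n) ≤ g (p.getVert m) := fun m =>
    hmin _ (p.getVert_mem_support m)
  have hpos : p.length ≠ 0 := fun h => hij (p.eq_of_length_eq_zero h)
  have h0 : n ≠ 0 := by
    rintro rfl
    have hadj := p.adj_getVert_succ (i := 0) (by omega)
    rw [p.getVert_zero] at hadj hmin'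
    exact hi _ (rel_of_fromRel_adj_of_le hg hadj (hmin' 1))
  have hn' : n ≠ p.length := by
    rintro rfl
    have hadj := p.adj_getVert_succ (i := p.length - 1) (by omega)
    rw [Nat.sub_add_cancel (by omega), p.getVert_length] at hadj
    rw [p.getVert_length] at hmin'
    exact hj _ (rel_of_fromRel_adj_of_le hg hadj.symm (hmin' _))
  have hx := p.adj_getVert_succ (i := n - 1) (by omega)
  rw [Nat.sub_add_cancel (by omega)] at hx
  have hy := p.adj_getVert_succ (i := n) (by omega)
  have := hp.getVert_injOn (by simp; omega) (by simp; omega)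
    (eq_of_fromRel_adj_of_le hg huniq hx.symm hy (hmin' _) (hmin' _))
  omega

end SimpleGraph

section XiStep

variable {r : List (ℕ × ℕ)} {a b : ℕ}

lemma mem_xiStep_fst {e : ℕ × ℕ} :
    e ∈ (xiStep r).1 ↔ ∃ p < r.length, qual r p = true ∧
      e = ((r.getD (prevIdx r.length p) (0, 0)).1, (r.getD p (0, 0)).1) := by
  simp only [xiStep, List.mem_filterMap, List.mem_range, Option.ite_none_right_eq_some,
    Option.some.injEq]
  grind

lemma map_getD_fst_range :
    (List.range r.length).map (fun p => (r.getD p (0, 0)).1) = r.map Prod.fst :=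
  List.ext_getElem (by simp) fun i _ h => by simp [List.getElem?_eq_getElem (by simpa using h)]

lemma map_fst_xiStep_snd :
    (xiStep r).2.map Prod.fst =
      ((List.range r.length).filter fun p => !qual r p).map fun p => (r.getD p (0, 0)).1 := by
  rw [xiStep, List.map_filterMap, ← List.filterMap_eq_map', List.filterMap_filter]
  congr 1
  funext p
  cases qual r p <;> rfl

lemma map_fst_xiStep_snd_sublist : ((xiStep r).2.map Prod.fst).Sublist (r.map Prod.fst) := by
  rw [map_fst_xiStep_snd, ← map_getD_fst_range]
  exact List.filter_sublist.map _

lemma eq_of_getD_fst_eq (hr : (r.map Prod.fst).Nodup) {p q : ℕ}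
    (hp : p < r.length) (hq : q < r.length)
    (h : (r.getD p (0, 0)).1 = (r.getD q (0, 0)).1) : p = q := by
  rw [List.getD_eq_getElem _ _ hp, List.getD_eq_getElem _ _ hq] at h
  exact (hr.getElem_inj_iff (i := p) (j := q) (hi := by simpa) (hj := by simpa)).1 (by simpa)

lemma qual_prevIdx_of_qual {p : ℕ} (h : qual r p = true) :
    qual r (prevIdx r.length p) = false := by
  simp_all [qual]

lemma snd_mem_of_mem_xiStep_fst (h : (a, b) ∈ (xiStep r).1) : b ∈ r.map Prod.fst := by
  obtain ⟨p, hp, -, he⟩ := mem_xiStep_fst.1 h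
  rw [← map_getD_fst_range]
  exact List.mem_map.2 ⟨p, List.mem_range.2 hp, (congrArg Prod.snd he).symm⟩

lemma fst_mem_xiStep_snd_of_mem_xiStep_fst (h : (a, b) ∈ (xiStep r).1) :
    a ∈ (xiStep r).2.map Prod.fst := by
  obtain ⟨p, hp, hq, he⟩ := mem_xiStep_fst.1 h
  rw [map_fst_xiStep_snd]
  refine List.mem_map.2
    ⟨prevIdx r.length p, List.mem_filter.2 ⟨?_, ?_⟩, (congrArg Prod.fst he).symm⟩
  · exact List.mem_range.2 (Nat.mod_lt _ (by omega))
  · simp [qual_prevIdx_of_qual hq]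

lemma snd_notMem_xiStep_snd_of_mem_xiStep_fst (hr : (r.map Prod.fst).Nodup)
    (h : (a, b) ∈ (xiStep r).1) : b ∉ (xiStep r).2.map Prod.fst := by
  obtain ⟨p, hp, hq, he⟩ := mem_xiStep_fst.1 h
  rw [map_fst_xiStep_snd]
  intro hb
  obtain ⟨q, hq', hqb⟩ := List.mem_map.1 hb
  obtain ⟨hqr, hnq⟩ := List.mem_filter.1 hq'
  obtain rfl := eq_of_getD_fst_eq hr (List.mem_range.1 hqr) hp (hqb.trans (congrArg Prod.snd he))
  simp [hq] at hnq

lemma eq_of_mem_xiStep_fst (hr : (r.map Prod.fst).Nodup) {a' : ℕ}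
    (h : (a, b) ∈ (xiStep r).1) (h' : (a', b) ∈ (xiStep r).1) : a = a' := by
  obtain ⟨p, hp, -, he⟩ := mem_xiStep_fst.1 h
  obtain ⟨p', hp', -, he'⟩ := mem_xiStep_fst.1 h'
  simp only [Prod.mk.injEq] at he he'
  obtain rfl := eq_of_getD_fst_eq hr hp hp' (he.2.symm.trans he'.2)
  exact he.1.trans he'.1.symm

end XiStep

section Iteration

variable {r : List (ℕ × ℕ)} {a b t : ℕ}

lemma ringIter_sublist_of_le {u u' : ℕ} (h : u ≤ u') :
    ((ringIter r u').map Prod.fst).Sublist ((ringIter r u).map Prod.fst) := by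
  induction u', h using Nat.le_induction with
  | base => exact List.Sublist.refl _
  | succ u' _ ih => exact map_fst_xiStep_snd_sublist.trans ih

lemma nodup_ringIter (hr : (r.map Prod.fst).Nodup) (u : ℕ) :
    ((ringIter r u).map Prod.fst).Nodup :=
  (ringIter_sublist_of_le (Nat.zero_le u)).nodup hr

lemma mem_edgesIter {e : ℕ × ℕ} :
    e ∈ edgesIter r t ↔ ∃ u < t, e ∈ (xiStep (ringIter r u)).1 := by
  induction t with
  | zero => simp [edgesIter]
  | succ t ih =>
    simp only [edgesIter, List.mem_append, ih, Nat.lt_succ_iff_lt_or_eq]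
    grind

lemma notMem_ringIter_of_mem_xiStep_fst (hr : (r.map Prod.fst).Nodup) {u : ℕ}
    (h : (a, b) ∈ (xiStep (ringIter r u)).1) (hut : u < t) :
    b ∉ (ringIter r t).map Prod.fst := fun hb =>
  snd_notMem_xiStep_snd_of_mem_xiStep_fst (nodup_ringIter hr u) h
    ((ringIter_sublist_of_le hut).subset hb)

lemma notMem_ringIter_of_mem_edgesIter (hr : (r.map Prod.fst).Nodup)
    (h : (a, b) ∈ edgesIter r t) : b ∉ (ringIter r t).map Prod.fst := by
  obtain ⟨u, hut, hu⟩ := mem_edgesIter.1 h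
  exact notMem_ringIter_of_mem_xiStep_fst hr hu hut

lemma eq_of_mem_edgesIter (hr : (r.map Prod.fst).Nodup) {a' : ℕ}
    (h : (a, b) ∈ edgesIter r t) (h' : (a', b) ∈ edgesIter r t) : a = a' := by
  obtain ⟨u, -, hu⟩ := mem_edgesIter.1 h
  obtain ⟨u', -, hu'⟩ := mem_edgesIter.1 h'
  rcases lt_trichotomy u u' with hlt | rfl | hlt
  · exact absurd (snd_mem_of_mem_xiStep_fst hu') (notMem_ringIter_of_mem_xiStep_fst hr hu hlt)
  · exact eq_of_mem_xiStep_fst (nodup_ringIter hr u) hu hu'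
  · exact absurd (snd_mem_of_mem_xiStep_fst hu) (notMem_ringIter_of_mem_xiStep_fst hr hu' hlt)

def lifetime (r : List (ℕ × ℕ)) (t v : ℕ) : ℕ :=
  Nat.count (fun u => v ∈ (ringIter r u).map Prod.fst) (t + 1)

lemma lifetime_lt_of_mem_edgesIter (hr : (r.map Prod.fst).Nodup)
    (h : (a, b) ∈ edgesIter r t) : lifetime r t b < lifetime r t a := by
  obtain ⟨u, hut, hu⟩ := mem_edgesIter.1 h
  have hb : lifetime r t b ≤ u + 1 := by
    rw [lifetime, show t + 1 = (u + 1) + (t - u) by omega, Nat.count_add,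
      Nat.count_iff_forall_not.2 fun k _ hk =>
        notMem_ringIter_of_mem_xiStep_fst hr hu (Nat.lt_add_right k u.lt_succ_self) hk]
    exact (Nat.add_zero _).trans_le (Nat.count_le _)
  have ha : u + 2 ≤ lifetime r t a := by
    calc u + 2 = Nat.count (fun u' => a ∈ (ringIter r u').map Prod.fst) (u + 2) :=
          (Nat.count_of_forall fun k hk =>
            (ringIter_sublist_of_le (u' := u + 1) (by omega)).subset
              (fst_mem_xiStep_snd_of_mem_xiStep_fst hu)).symm
      _ ≤ lifetime r t a := Nat.count_monotone _ (by omega)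
  omega

end Iteration

open Classical

theorem xi_no_cycle_general (s : List ℕ) :
    ∀ t : ℕ,
      (SimpleGraph.fromRel fun i j : Fin s.length =>
          ((i : ℕ), (j : ℕ)) ∈ edgesIter (s.zipIdx.map Prod.swap) t).IsAcyclic ∧
      ∀ i j : Fin s.length,
        (i : ℕ) ∈ (ringIter (s.zipIdx.map Prod.swap) t).map Prod.fst →
        (j : ℕ) ∈ (ringIter (s.zipIdx.map Prod.swap) t).map Prod.fst → i ≠ j →
        ¬ (SimpleGraph.fromRel fun a b : Fin s.length =>
            ((a : ℕ), (b : ℕ)) ∈ edgesIter (s.zipIdx.map Prod.swap) t).Reachable i j := by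
  intro t
  set r := s.zipIdx.map Prod.swap
  have hr : (r.map Prod.fst).Nodup := by
    simpa [r, List.map_map, Function.comp_def] using List.nodup_range' (s := 0) (n := s.length)
  have hrank : ∀ ⦃a b : Fin s.length⦄, ((a : ℕ), (b : ℕ)) ∈ edgesIter r t →
      lifetime r t b < lifetime r t a := fun _ _ => lifetime_lt_of_mem_edgesIter hr
  have huniq : ∀ ⦃a a' b : Fin s.length⦄, ((a : ℕ), (b : ℕ)) ∈ edgesIter r t →
      ((a' : ℕ), (b : ℕ)) ∈ edgesIter r t → a = a' :=
    fun _ _ _ h h' => Fin.ext (eq_of_mem_edgesIter hr h h')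
  have hroot : ∀ i : Fin s.length, (i : ℕ) ∈ (ringIter r t).map Prod.fst →
      ∀ a : Fin s.length, ((a : ℕ), (i : ℕ)) ∉ edgesIter r t :=
    fun _ hi _ h => notMem_ringIter_of_mem_edgesIter hr h hi
  exact ⟨SimpleGraph.isAcyclic_fromRel_of_rank hrank huniq, fun i j hi hj hij =>
    SimpleGraph.not_reachable_fromRel_of_rank hrank huniq (hroot i hi) (hroot j hj) hij⟩

/-- In the ξ algorithm no edge ever creates a cycle: at every stage the graph built from
the edges added so far is acyclic, because no path exists between distinct unprocessed
nodes at any stage. -/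
theorem xi_no_cycle (s : List ℕ) (k : ℕ) (hk : k ≤ s.length)
    (hsum : s.sum = s.length - k) :
    ∀ t : ℕ,
      (SimpleGraph.fromRel fun i j : Fin s.length =>
          ((i : ℕ), (j : ℕ)) ∈ edgesIter (s.zipIdx.map Prod.swap) t).IsAcyclic ∧
      ∀ i j : Fin s.length,
        (i : ℕ) ∈ (ringIter (s.zipIdx.map Prod.swap) t).map Prod.fst →
        (j : ℕ) ∈ (ringIter (s.zipIdx.map Prod.swap) t).map Prod.fst → i ≠ j →
        ¬ (SimpleGraph.fromRel fun a b : Fin s.length =>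
            ((a : ℕ), (b : ℕ)) ∈ edgesIter (s.zipIdx.map Prod.swap) t).Reachable i j :=
  xi_no_cycle_general s
end

section
/- The output forest of the $\xi$ algorithm is invariant under cyclic rotation of the input: if $\hat{\mathcal{U}}, \hat{\mathcal{S}}$ are obtained from $\mathcal{U}, \mathcal{S}$ by the same cyclic permutation, then $\xi(\hat{\mathcal{U}}, \hat{\mathcal{S}})$ is the same forest (same edge set and parent-child relations) as $\xi(\mathcal{U}, \mathcal{S}}$, up to the ordering of trees. -/
/-!
Rotating the ring only relabels positions: position `p` of `r.rotate i` is position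
`(p + i) % n` of `r`, and every ingredient of a ξ step (counters, the previous position,
the next position, qualification) commutes with this relabelling. Hence one step applied to a
rotated ring adds the same edges, listed in rotated order, and leaves a rotation of the same
ring; by induction on the fuel, the accumulated edge lists are permutations of each other.
-/

namespace List

theorem IsRotated.filterMap {α β : Type*} {l l' : List α} (h : l ~r l') (f : α → Option β) :
    l.filterMap f ~r l'.filterMap f := by
  obtain ⟨n, rfl⟩ := h
  conv_lhs => rw [← take_append_drop (n % l.length) l]
  rw [rotate_eq_drop_append_take_mod, filterMap_append, filterMap_append]
  exact isRotated_append

theorem map_add_mod_range (n i : ℕ) :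
    (range n).map (fun p => (p + i) % n) = (range n).rotate i := by
  apply ext_getElem <;> simp [getElem_rotate]

theorem filterMap_range_isRotated {β : Type*} {f g : ℕ → Option β} {n : ℕ} (i : ℕ)
    (h : ∀ p < n, g p = f ((p + i) % n)) :
    (range n).filterMap g ~r (range n).filterMap f := by
  have hg : (range n).filterMap g = ((range n).map fun p => (p + i) % n).filterMap f := by
    rw [filterMap_map]
    exact filterMap_congr fun p hp => h p (mem_range.1 hp)
  rw [hg, map_add_mod_range]
  exact (IsRotated.forall _ i).filterMap f

theorem getD_rotate {α : Type*} (r : List α) (d : α) {i p : ℕ} (hp : p < r.length) :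
    (r.rotate i).getD p d = r.getD ((p + i) % r.length) d := by
  rw [getD_eq_getElem?_getD, getD_eq_getElem?_getD, getElem?_rotate hp]

end List

open List

theorem prevIdx_lt {n : ℕ} (p : ℕ) (hn : 0 < n) : prevIdx n p < n :=
  Nat.mod_lt _ hn

theorem prevIdx_add_mod {n : ℕ} (p i : ℕ) (hn : 0 < n) :
    prevIdx n ((p + i) % n) = (prevIdx n p + i) % n := by
  unfold prevIdx
  rw [Nat.mod_add_mod, show (p + i) % n + n - 1 = (p + i) % n + (n - 1) by omega,
    Nat.mod_add_mod]
  congr 1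
  omega

theorem add_one_mod_add_mod_comm (n p i : ℕ) : ((p + 1) % n + i) % n = ((p + i) % n + 1) % n := by
  rw [Nat.mod_add_mod, Nat.mod_add_mod, add_right_comm]

theorem qual_rotate (r : List (ℕ × ℕ)) {i p : ℕ} (hp : p < r.length) :
    qual (r.rotate i) p = qual r ((p + i) % r.length) := by
  have hn : 0 < r.length := by omega
  unfold qual
  rw [length_rotate, getD_rotate r _ hp, getD_rotate r _ (prevIdx_lt p hn),
    prevIdx_add_mod p i hn]

theorem xiStep_fst_rotate (r : List (ℕ × ℕ)) (i : ℕ) :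
    (xiStep (r.rotate i)).1 ~r (xiStep r).1 := by
  simp only [xiStep, length_rotate]
  refine filterMap_range_isRotated i fun p hp => ?_
  have hn : 0 < r.length := by omega
  rw [qual_rotate r hp, getD_rotate r _ hp, getD_rotate r _ (prevIdx_lt p hn),
    prevIdx_add_mod p i hn]

theorem xiStep_snd_rotate (r : List (ℕ × ℕ)) (i : ℕ) :
    (xiStep (r.rotate i)).2 ~r (xiStep r).2 := by
  simp only [xiStep, length_rotate]
  refine filterMap_range_isRotated i fun p hp => ?_
  have hn : 0 < r.length := by omega
  rw [qual_rotate r hp, getD_rotate r _ hp, qual_rotate r (Nat.mod_lt _ hn),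
    add_one_mod_add_mod_comm]

theorem xiAux_perm_of_isRotated (t : ℕ) {r r' : List (ℕ × ℕ)} (h : r ~r r') :
    (xiAux t r).1 ~ (xiAux t r').1 := by
  induction t generalizing r r' with
  | zero => simp [xiAux]
  | succ t ih =>
    obtain ⟨i, rfl⟩ := h
    have hedges := xiStep_fst_rotate r i
    by_cases hr : (xiStep r).1 = []
    · have hri : (xiStep (r.rotate i)).1 = [] := isRotated_nil_iff.1 (hr ▸ hedges)
      simp [xiAux, hr, hri]
    · have hri : (xiStep (r.rotate i)).1 ≠ [] := fun hri =>
        hr (isRotated_nil_iff.1 (hri ▸ hedges.symm))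
      simp only [xiAux, if_neg hr, if_neg hri]
      exact (hedges.perm.append (ih (xiStep_snd_rotate r i))).symm

/-- The output of the ξ algorithm is invariant under cyclic rotation of the input ring:
rotating the (label, counter) pairs produces the same forest, i.e. the same set of
(parent, child) edges, up to the ordering of the trees. -/
theorem xi_rotation_invariant (r : List (ℕ × ℕ)) (i : ℕ) :
    ∀ e : ℕ × ℕ, e ∈ (xiRun (r.rotate i)).1 ↔ e ∈ (xiRun r).1 := by
  intro e
  unfold xiRun
  rw [length_rotate]
  exact (xiAux_perm_of_isRotated r.length (IsRotated.forall r i)).mem_iff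
end
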